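/- Under construction (H2), with S1 = V0·V1 and S2 = V0 where V0 ~ Beta(1,α1), V1 ~ Beta(1+α1,α2) independent, the correlation of S1 and S2 equals sqrt(α1(2+α1+α2) / ((α1+α2)(2+α1))). -/

import Mathlib

/-!
Multiplying the Beta(a, b) density by `x` gives `a / (a + b)` times the Beta(a + 1, b)
density, so `E[X] = a / (a + b)` and `E[X²] = a / (a + b) · (a + 1) / (a + b + 1)`.
For independent `X`, `Y` the moments of `(XY, X)` factor: `Cov(XY, X) = E[Y] Var X` and
`Var(XY) = Var X · E[Y²] + E[X]² Var Y`, and every quantity is now an explicit positive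
rational function of `α1`, `α2`.
-/

open MeasureTheory ProbabilityTheory Real Filter

/-- The density of a Beta(a,b) random variable on (0,1). -/
noncomputable def betaPDFReal (a b x : ℝ) : ℝ :=
  if 0 < x ∧ x < 1 then
    (Real.Gamma (a + b) / (Real.Gamma a * Real.Gamma b)) * x ^ (a - 1) * (1 - x) ^ (b - 1)
  else 0

/-- The Beta(a,b) probability measure on ℝ. -/
noncomputable def betaMeasure (a b : ℝ) : Measure ℝ :=
  MeasureTheory.volume.withDensity (fun x => ENNReal.ofReal (_root_.betaPDFReal a b x))

/-- `X` is a beta random variable with parameters `(a, b)` on `(Ω, μ)`. -/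
def HasBetaLaw {Ω : Type*} [MeasurableSpace Ω] (μ : Measure Ω) (X : Ω → ℝ) (a b : ℝ) : Prop :=
  Measurable X ∧ μ.map X = _root_.betaMeasure a b

theorem betaPDFReal_eq_betaPDFReal (a b : ℝ) :
    _root_.betaPDFReal a b = ProbabilityTheory.betaPDFReal a b := by
  ext x
  simp only [_root_.betaPDFReal, ProbabilityTheory.betaPDFReal, beta, one_div_div]

theorem betaMeasure_eq_betaMeasure (a b : ℝ) :
    _root_.betaMeasure a b = ProbabilityTheory.betaMeasure a b := by
  rw [_root_.betaMeasure, betaPDFReal_eq_betaPDFReal]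
  rfl

theorem isProbabilityMeasure_betaMeasure {a b : ℝ} (ha : 0 < a) (hb : 0 < b) :
    IsProbabilityMeasure (_root_.betaMeasure a b) := by
  rw [betaMeasure_eq_betaMeasure]
  exact isProbabilityMeasureBeta ha hb

theorem betaPDFReal_nonneg {a b : ℝ} (ha : 0 < a) (hb : 0 < b) (x : ℝ) :
    0 ≤ _root_.betaPDFReal a b x := by
  by_cases hx : 0 < x ∧ x < 1
  · rw [betaPDFReal_eq_betaPDFReal]
    exact (betaPDFReal_pos hx.1 hx.2 ha hb).le
  · simp [_root_.betaPDFReal, hx]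

theorem mul_betaPDFReal {a b : ℝ} (ha : 0 < a) (hb : 0 < b) (x : ℝ) :
    x * _root_.betaPDFReal a b x = a / (a + b) * _root_.betaPDFReal (a + 1) b x := by
  unfold _root_.betaPDFReal
  split_ifs with hx
  · rw [add_right_comm, Gamma_add_one ha.ne', Gamma_add_one (by positivity), add_sub_cancel_right,
      rpow_sub_one hx.1.ne']
    have := Gamma_pos_of_pos ha
    have := Gamma_pos_of_pos hb
    have := Gamma_pos_of_pos (add_pos ha hb)
    have := hx.1.ne'
    field_simp
  · simp

theorem integral_mul_betaMeasure {a b : ℝ} (ha : 0 < a) (hb : 0 < b) (g : ℝ → ℝ) :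
    ∫ x, x * g x ∂_root_.betaMeasure a b =
      a / (a + b) * ∫ x, g x ∂_root_.betaMeasure (a + 1) b := by
  simp only [_root_.betaMeasure, betaPDFReal_eq_betaPDFReal]
  rw [integral_withDensity_eq_integral_toReal_smul (by fun_prop) (by simp),
    integral_withDensity_eq_integral_toReal_smul (by fun_prop) (by simp), ← integral_const_mul]
  refine integral_congr_ae (ae_of_all _ fun x => ?_)
  simp only [smul_eq_mul, ← betaPDFReal_eq_betaPDFReal]
  rw [ENNReal.toReal_ofReal (betaPDFReal_nonneg ha hb x),
    ENNReal.toReal_ofReal (betaPDFReal_nonneg (by positivity) hb x)]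
  linear_combination g x * mul_betaPDFReal ha hb x

theorem integral_id_betaMeasure {a b : ℝ} (ha : 0 < a) (hb : 0 < b) :
    ∫ x, x ∂_root_.betaMeasure a b = a / (a + b) := by
  have := isProbabilityMeasure_betaMeasure (by positivity : 0 < a + 1) hb
  simpa using integral_mul_betaMeasure ha hb (fun _ => 1)

theorem integral_sq_betaMeasure {a b : ℝ} (ha : 0 < a) (hb : 0 < b) :
    ∫ x, x ^ 2 ∂_root_.betaMeasure a b = a / (a + b) * ((a + 1) / (a + b + 1)) := by
  rw [add_right_comm, ← integral_id_betaMeasure (by positivity : 0 < a + 1) hb,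
    ← integral_mul_betaMeasure ha hb]
  simp only [sq]

namespace HasBetaLaw

variable {Ω : Type*} [MeasurableSpace Ω] {μ : Measure Ω} {X : Ω → ℝ} {a b : ℝ}

theorem integral_comp (h : HasBetaLaw μ X a b) {g : ℝ → ℝ}
    (hg : AEStronglyMeasurable g (_root_.betaMeasure a b)) :
    ∫ ω, g (X ω) ∂μ = ∫ x, g x ∂_root_.betaMeasure a b := by
  rw [← h.2] at hg ⊢
  exact (integral_map h.1.aemeasurable hg).symm

theorem integral_eq (h : HasBetaLaw μ X a b) (ha : 0 < a) (hb : 0 < b) :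
    ∫ ω, X ω ∂μ = a / (a + b) := by
  rw [← integral_id_betaMeasure ha hb]
  exact h.integral_comp aestronglyMeasurable_id

theorem integral_sq (h : HasBetaLaw μ X a b) (ha : 0 < a) (hb : 0 < b) :
    ∫ ω, X ω ^ 2 ∂μ = a / (a + b) * ((a + 1) / (a + b + 1)) := by
  rw [← integral_sq_betaMeasure ha hb]
  exact h.integral_comp (g := fun x => x ^ 2) (by fun_prop)

theorem integral_sq_sub_sq (h : HasBetaLaw μ X a b) (ha : 0 < a) (hb : 0 < b) :
    ∫ ω, X ω ^ 2 ∂μ - (∫ ω, X ω ∂μ) ^ 2 = a * b / ((a + b) ^ 2 * (a + b + 1)) := by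
  rw [h.integral_sq ha hb, h.integral_eq ha hb]
  field_simp
  ring

end HasBetaLaw

namespace ProbabilityTheory.IndepFun

variable {Ω : Type*} [MeasurableSpace Ω] {μ : Measure Ω} {X Y : Ω → ℝ}

theorem integral_pow_mul_pow (hXY : IndepFun X Y μ) (hX : AEMeasurable X μ)
    (hY : AEMeasurable Y μ) (m n : ℕ) :
    ∫ ω, X ω ^ m * Y ω ^ n ∂μ = (∫ ω, X ω ^ m ∂μ) * ∫ ω, Y ω ^ n ∂μ :=
  (hXY.comp (measurable_id.pow_const m) (measurable_id.pow_const n))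
    |>.integral_fun_mul_eq_mul_integral (hX.pow_const m).aestronglyMeasurable
      (hY.pow_const n).aestronglyMeasurable

theorem integral_mul_mul_self_sub (hXY : IndepFun X Y μ) (hX : AEMeasurable X μ)
    (hY : AEMeasurable Y μ) :
    ∫ ω, X ω * Y ω * X ω ∂μ - (∫ ω, X ω * Y ω ∂μ) * ∫ ω, X ω ∂μ =
      (∫ ω, Y ω ∂μ) * (∫ ω, X ω ^ 2 ∂μ - (∫ ω, X ω ∂μ) ^ 2) := by
  have h11 := hXY.integral_pow_mul_pow hX hY 1 1
  have h21 := hXY.integral_pow_mul_pow hX hY 2 1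
  simp only [pow_one] at h11 h21
  simp only [sq, mul_right_comm _ (Y _)] at h21 ⊢
  rw [h11, h21]
  ring

theorem integral_mul_sq_sub_sq (hXY : IndepFun X Y μ) (hX : AEMeasurable X μ)
    (hY : AEMeasurable Y μ) :
    ∫ ω, (X ω * Y ω) ^ 2 ∂μ - (∫ ω, X ω * Y ω ∂μ) ^ 2 =
      (∫ ω, X ω ^ 2 ∂μ - (∫ ω, X ω ∂μ) ^ 2) * ∫ ω, Y ω ^ 2 ∂μ +
        (∫ ω, X ω ∂μ) ^ 2 * (∫ ω, Y ω ^ 2 ∂μ - (∫ ω, Y ω ∂μ) ^ 2) := by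
  have h11 := hXY.integral_pow_mul_pow hX hY 1 1
  simp only [pow_one] at h11
  simp only [mul_pow]
  rw [hXY.integral_pow_mul_pow hX hY 2 2, h11]
  ring

end ProbabilityTheory.IndepFun

theorem div_sqrt_mul_sqrt_eq_sqrt {c v w : ℝ} (hc : 0 ≤ c) (hv : 0 ≤ v) (hw : 0 ≤ w) :
    c / (√v * √w) = √(c ^ 2 / (v * w)) := by
  rw [sqrt_div' _ (mul_nonneg hv hw), sqrt_sq hc, sqrt_mul hv]

theorem correlation_H2_general {Ω : Type*} [MeasurableSpace Ω] (μ : Measure Ω)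
    (V0 V1 : Ω → ℝ) (α1 α2 : ℝ) (hα1 : 0 < α1) (hα2 : 0 < α2)
    (h0 : HasBetaLaw μ V0 1 α1) (h1 : HasBetaLaw μ V1 (1 + α1) α2)
    (hind : IndepFun V0 V1 μ)
    (S1 S2 : Ω → ℝ) (hS1 : S1 = fun ω => V0 ω * V1 ω) (hS2 : S2 = V0) :
    ((∫ ω, S1 ω * S2 ω ∂μ) - (∫ ω, S1 ω ∂μ) * (∫ ω, S2 ω ∂μ)) /
        (Real.sqrt ((∫ ω, S1 ω ^ 2 ∂μ) - (∫ ω, S1 ω ∂μ) ^ 2) *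
          Real.sqrt ((∫ ω, S2 ω ^ 2 ∂μ) - (∫ ω, S2 ω ∂μ) ^ 2)) =
      Real.sqrt (α1 * (2 + α1 + α2) / ((α1 + α2) * (2 + α1))) := by
  subst S1 S2
  rw [hind.integral_mul_mul_self_sub h0.1.aemeasurable h1.1.aemeasurable,
    hind.integral_mul_sq_sub_sq h0.1.aemeasurable h1.1.aemeasurable,
    h0.integral_sq_sub_sq one_pos hα1, h1.integral_sq_sub_sq (by positivity) hα2,
    h0.integral_eq one_pos hα1, h1.integral_eq (by positivity) hα2,
    h1.integral_sq (by positivity) hα2,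
    div_sqrt_mul_sqrt_eq_sqrt (by positivity) (by positivity) (by positivity)]
  congr 1
  field_simp
  ring

theorem correlation_H2 {Ω : Type*} [MeasurableSpace Ω] (μ : Measure Ω)
    [IsProbabilityMeasure μ] (V0 V1 : Ω → ℝ) (α1 α2 : ℝ) (hα1 : 0 < α1) (hα2 : 0 < α2)
    (h0 : HasBetaLaw μ V0 1 α1) (h1 : HasBetaLaw μ V1 (1 + α1) α2)
    (hind : IndepFun V0 V1 μ)
    (S1 S2 : Ω → ℝ) (hS1 : S1 = fun ω => V0 ω * V1 ω) (hS2 : S2 = V0) :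
    ((∫ ω, S1 ω * S2 ω ∂μ) - (∫ ω, S1 ω ∂μ) * (∫ ω, S2 ω ∂μ)) /
        (Real.sqrt ((∫ ω, S1 ω ^ 2 ∂μ) - (∫ ω, S1 ω ∂μ) ^ 2) *
          Real.sqrt ((∫ ω, S2 ω ^ 2 ∂μ) - (∫ ω, S2 ω ∂μ) ^ 2)) =
      Real.sqrt (α1 * (2 + α1 + α2) / ((α1 + α2) * (2 + α1))) :=
  correlation_H2_general μ V0 V1 α1 α2 hα1 hα2 h0 h1 hind S1 S2 hS1 hS2
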